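/- arXiv:2510.21294 — 2 statements merged into one kernel-verified Lean document; each statement's English description precedes it below -/
import Mathlib

section
/- For a continuously differentiable signal x : ℝ → ℂ, the phasors satisfy the differential relation d/dt X_k(t) = Y_k(t) − j k ω X_k(t), where Y_k is the k-th phasor of the derivative ẋ. In particular, if ẋ(t) = f(t) then Ẋ_k = F_k − jkω X_k with F = phasors of f. -/
open MeasureTheory intervalIntegral

/-- Sliding Fourier (phasor) coefficient. -/
noncomputable def phasor (T : ℝ) (x : ℝ → ℂ) (k : ℤ) (t : ℝ) : ℂ :=
  (1 / (T : ℂ)) * ∫ τ in (t - T)..t,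
    x τ * Complex.exp (-(Complex.I * (k : ℂ) * ((2 * Real.pi / T : ℝ) : ℂ) * (τ : ℂ)))

/-
The phasor is a moving-window integral of `x τ e^{-jkωτ}`. Differentiating the window gives the
increment of the integrand across the window, and by the fundamental theorem of calculus this
increment is the window integral of `(x e^{-jkωτ})' = ẋ e^{-jkωτ} − jkω x e^{-jkωτ}`.
-/

section Window

variable {E : Type*} [NormedAddCommGroup E] [NormedSpace ℝ E] [CompleteSpace E]

theorem hasDerivAt_integral_window {g : ℝ → E} (hg : Continuous g) (T t : ℝ) :
    HasDerivAt (fun s => ∫ τ in (s - T)..s, g τ) (g t - g (t - T)) t := by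
  have hupper : HasDerivAt (fun s => ∫ τ in (0 : ℝ)..s, g τ) (g t) t :=
    (hg.integral_hasStrictDerivAt 0 t).hasDerivAt
  have hlower : HasDerivAt (fun s => ∫ τ in (0 : ℝ)..(s - T), g τ) (g (t - T)) t := by
    simpa using ((hg.integral_hasStrictDerivAt 0 (t - T)).hasDerivAt.comp_sub_const t T)
  refine (hupper.sub hlower).congr_of_eventuallyEq (Filter.Eventually.of_forall fun s => ?_)
  exact (integral_interval_sub_left (hg.intervalIntegrable _ _) (hg.intervalIntegrable _ _)).symm

theorem hasDerivAt_integral_window_of_hasDerivAt {g g' : ℝ → E}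
    (hderiv : ∀ τ, HasDerivAt g (g' τ) τ) (hg' : Continuous g') (T t : ℝ) :
    HasDerivAt (fun s => ∫ τ in (s - T)..s, g τ) (∫ τ in (t - T)..t, g' τ) t := by
  rw [integral_eq_sub_of_hasDerivAt (fun τ _ => hderiv τ) (hg'.intervalIntegrable _ _)]
  exact hasDerivAt_integral_window
    (continuous_iff_continuousAt.2 fun τ => (hderiv τ).continuousAt) T t

end Window

theorem hasDerivAt_mul_exp_neg_mul {x : ℝ → ℂ} {x' : ℂ} {τ : ℝ} (hx : HasDerivAt x x' τ)
    (a : ℂ) :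
    HasDerivAt (fun s : ℝ => x s * Complex.exp (-(a * s)))
      (x' * Complex.exp (-(a * τ)) - a * (x τ * Complex.exp (-(a * τ)))) τ := by
  have hexp :
      HasDerivAt (fun s : ℝ => Complex.exp (-(a * s))) (-a * Complex.exp (-(a * τ))) τ := by
    simpa [mul_comm] using (((hasDerivAt_id τ).ofReal_comp.const_mul a).neg).cexp
  exact (hx.mul hexp).congr_deriv (by ring)

theorem hasDerivAt_integral_window_mul_exp_neg_mul {x : ℝ → ℂ} (hx : ContDiff ℝ 1 x)
    (a : ℂ) (T t : ℝ) :
    HasDerivAt (fun s => ∫ τ in (s - T)..s, x τ * Complex.exp (-(a * τ)))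
      ((∫ τ in (t - T)..t, deriv x τ * Complex.exp (-(a * τ)))
        - a * ∫ τ in (t - T)..t, x τ * Complex.exp (-(a * τ))) t := by
  have hexp : Continuous fun τ : ℝ => Complex.exp (-(a * τ)) := by fun_prop
  have hxe : Continuous fun τ => x τ * Complex.exp (-(a * τ)) := hx.continuous.mul hexp
  have hx'e : Continuous fun τ => deriv x τ * Complex.exp (-(a * τ)) :=
    (hx.continuous_deriv le_rfl).mul hexp
  refine (hasDerivAt_integral_window_of_hasDerivAt
    (fun τ => hasDerivAt_mul_exp_neg_mul ((hx.differentiable one_ne_zero τ).hasDerivAt) a)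
    (hx'e.sub (continuous_const.mul hxe)) T t).congr_deriv ?_
  rw [integral_sub (hx'e.intervalIntegrable _ _) ((hxe.intervalIntegrable _ _).const_mul a),
    intervalIntegral.integral_const_mul]

theorem hasDerivAt_phasor_general
    (T : ℝ) (x : ℝ → ℂ)
    (hx : ContDiff ℝ 1 x) :
    ∀ (k : ℤ) (t : ℝ),
      HasDerivAt (fun s => phasor T x k s)
        (phasor T (deriv x) k t
          - Complex.I * (k : ℂ) * ((2 * Real.pi / T : ℝ) : ℂ) * phasor T x k t) t := by
  intro k t
  have h := (hasDerivAt_integral_window_mul_exp_neg_mul hx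
    (Complex.I * (k : ℂ) * ((2 * Real.pi / T : ℝ) : ℂ)) T t).const_mul (1 / (T : ℂ))
  refine h.congr_deriv ?_
  simp only [phasor]
  ring

/-- for a `C¹` signal `x`, the phasors satisfy
`d/dt Xₖ(t) = Yₖ(t) − j k ω Xₖ(t)`, where `Y` are the phasors of `ẋ`. -/
theorem hasDerivAt_phasor
    (T : ℝ) (hT : 0 < T) (x : ℝ → ℂ)
    (hx : ContDiff ℝ 1 x) :
    ∀ (k : ℤ) (t : ℝ),
      HasDerivAt (fun s => phasor T x k s)
        (phasor T (deriv x) k t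
          - Complex.I * (k : ℂ) * ((2 * Real.pi / T : ℝ) : ℂ) * phasor T x k t) t :=
  hasDerivAt_phasor_general T x hx
end

section
/- Let A, Q be constant complex n×n matrices with Q Hermitian positive definite, and suppose the harmonic Lyapunov equation (𝒜 − 𝒩)* 𝒫 + 𝒫 (𝒜 − 𝒩) + 𝒬 = 0 admits a bounded Hermitian positive-definite solution 𝒫 on ℓ²(ℤ, ℂⁿ) (with 𝒜, 𝒬 the block-diagonal operators of A, Q). Then A is Hurwitz, i.e., all eigenvalues of A have negative real part. -/
open Matrix MeasureTheory
open scoped InnerProductSpace ComplexOrder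

/-! Test the Lyapunov equation on the mode-`0` vector `x = e₀ ⊗ v` of an eigenvector `A v = μ v`:
there `𝒩` vanishes, so the equation reads `2 (Re μ) ⟪𝒫 x, x⟫ + v* Q v = 0`, and both
`⟪𝒫 x, x⟫ ≥ ε ‖x‖²` and `v* Q v` are positive. -/

section InnerProductSpace

variable {E : Type*} [NormedAddCommGroup E] [InnerProductSpace ℂ E]

theorem re_neg_of_inner_smul_add_inner_smul_add_eq_zero {x y : E} {μ q : ℂ}
    (hsymm : ⟪x, y⟫_ℂ = ⟪y, x⟫_ℂ) (hpos : 0 < (⟪y, x⟫_ℂ).re) (hq : 0 < q.re)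
    (h : ⟪μ • x, y⟫_ℂ + ⟪y, μ • x⟫_ℂ + q = 0) : μ.re < 0 := by
  have hre : 2 * μ.re * (⟪y, x⟫_ℂ).re + q.re = 0 := by
    have := congrArg Complex.re h
    rw [inner_smul_left, inner_smul_right, hsymm] at this
    simp only [Complex.add_re, Complex.mul_re, Complex.conj_re, Complex.conj_im,
      Complex.zero_re] at this
    linarith
  nlinarith

end InnerProductSpace

theorem lp.inner_single_single {𝕜 ι : Type*} [RCLike 𝕜] [DecidableEq ι] {G : ι → Type*}
    [∀ i, NormedAddCommGroup (G i)] [∀ i, InnerProductSpace 𝕜 (G i)] (i : ι) (a b : G i) :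
    ⟪lp.single 2 i a, lp.single (E := G) 2 i b⟫_𝕜 = ⟪a, b⟫_𝕜 := by
  rw [lp.inner_single_left, lp.single_apply_self]

theorem harmonic_lyapunov_implies_hurwitz_general
    {n : ℕ} (T : ℝ)
    (A Q : Matrix (Fin n) (Fin n) ℂ)
    (hQpos : ∀ v : Fin n → ℂ, v ≠ 0 → 0 < (star v) ⬝ᵥ (Q.mulVec v))
    (P : lp (fun _ : ℤ => EuclideanSpace ℂ (Fin n)) 2 →L[ℂ]
          lp (fun _ : ℤ => EuclideanSpace ℂ (Fin n)) 2)
    (hPsa : ∀ X Y, ⟪P X, Y⟫_ℂ = ⟪X, P Y⟫_ℂ)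
    (hPpos : ∃ ε : ℝ, 0 < ε ∧ ∀ X, ε * ‖X‖ ^ 2 ≤ (⟪P X, X⟫_ℂ).re)
    (hLyap : ∀ (m l : ℤ) (v w : EuclideanSpace ℂ (Fin n)),
      ⟪lp.single (E := fun _ : ℤ => EuclideanSpace ℂ (Fin n)) 2 m
          ((WithLp.equiv 2 _).symm (A.mulVec v)
            - (Complex.I * (m : ℂ) * ((2 * Real.pi / T : ℝ) : ℂ)) • v),
        P (lp.single (E := fun _ : ℤ => EuclideanSpace ℂ (Fin n)) 2 l w)⟫_ℂ
      + ⟪P (lp.single (E := fun _ : ℤ => EuclideanSpace ℂ (Fin n)) 2 m v),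
          lp.single (E := fun _ : ℤ => EuclideanSpace ℂ (Fin n)) 2 l
            ((WithLp.equiv 2 _).symm (A.mulVec w)
              - (Complex.I * (l : ℂ) * ((2 * Real.pi / T : ℝ) : ℂ)) • w)⟫_ℂ
      + ⟪lp.single (E := fun _ : ℤ => EuclideanSpace ℂ (Fin n)) 2 m v, lp.single (E := fun _ : ℤ => EuclideanSpace ℂ (Fin n)) 2 l ((WithLp.equiv 2 _).symm (Q.mulVec w))⟫_ℂ = 0) :
    ∀ μ : ℂ, (∃ v : Fin n → ℂ, v ≠ 0 ∧ A.mulVec v = μ • v) → μ.re < 0 := by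
  rintro μ ⟨v, hv, hAv⟩
  obtain ⟨ε, hε, hP⟩ := hPpos
  set x := lp.single (E := fun _ : ℤ => EuclideanSpace ℂ (Fin n)) 2 0 (WithLp.toLp 2 v) with hx_def
  have hx : x ≠ 0 := by
    rw [← norm_pos_iff, hx_def, lp.norm_single two_pos, norm_pos_iff]
    exact (WithLp.toLp_eq_zero 2).not.mpr hv
  have hmode : lp.single (E := fun _ : ℤ => EuclideanSpace ℂ (Fin n)) 2 0
      ((WithLp.equiv 2 _).symm (A.mulVec (WithLp.toLp 2 v))
        - (Complex.I * ((0 : ℤ) : ℂ) * ((2 * Real.pi / T : ℝ) : ℂ)) • WithLp.toLp 2 v) = μ • x := by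
    simp [hAv, x, lp.single_smul]
  have hq : ⟪x, lp.single (E := fun _ : ℤ => EuclideanSpace ℂ (Fin n)) 2 0
      ((WithLp.equiv 2 _).symm (Q.mulVec (WithLp.toLp 2 v)))⟫_ℂ = star v ⬝ᵥ Q *ᵥ v := by
    rw [lp.inner_single_single, EuclideanSpace.inner_eq_star_dotProduct, dotProduct_comm]
    rfl
  refine re_neg_of_inner_smul_add_inner_smul_add_eq_zero (hPsa x x).symm
    ((mul_pos hε (pow_pos (norm_pos_iff.mpr hx) 2)).trans_le (hP x))
    (Complex.lt_def.mp (hQpos v hv)).1 ?_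
  simpa only [hmode, ← hx_def, hq] using hLyap 0 0 (WithLp.toLp 2 v) (WithLp.toLp 2 v)

/-- if the harmonic Lyapunov equation
`(𝒜 − 𝒩)* 𝒫 + 𝒫 (𝒜 − 𝒩) + 𝒬 = 0` (stated weakly on the dense family of single-mode
vectors, on which the block-diagonal operators `𝒜 − 𝒩` and `𝒬` act explicitly) admits a
bounded self-adjoint solution `𝒫 ≥ εI` with `ε > 0`, with `Q` Hermitian positive
definite, then `A` is Hurwitz. -/
theorem harmonic_lyapunov_implies_hurwitz
    {n : ℕ} (T : ℝ) (hT : 0 < T)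
    (A Q : Matrix (Fin n) (Fin n) ℂ)
    (hQherm : Q.IsHermitian)
    (hQpos : ∀ v : Fin n → ℂ, v ≠ 0 → 0 < (star v) ⬝ᵥ (Q.mulVec v))
    (P : lp (fun _ : ℤ => EuclideanSpace ℂ (Fin n)) 2 →L[ℂ]
          lp (fun _ : ℤ => EuclideanSpace ℂ (Fin n)) 2)
    (hPsa : ∀ X Y, ⟪P X, Y⟫_ℂ = ⟪X, P Y⟫_ℂ)
    (hPpos : ∃ ε : ℝ, 0 < ε ∧ ∀ X, ε * ‖X‖ ^ 2 ≤ (⟪P X, X⟫_ℂ).re)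
    (hLyap : ∀ (m l : ℤ) (v w : EuclideanSpace ℂ (Fin n)),
      ⟪lp.single (E := fun _ : ℤ => EuclideanSpace ℂ (Fin n)) 2 m
          ((WithLp.equiv 2 _).symm (A.mulVec v)
            - (Complex.I * (m : ℂ) * ((2 * Real.pi / T : ℝ) : ℂ)) • v),
        P (lp.single (E := fun _ : ℤ => EuclideanSpace ℂ (Fin n)) 2 l w)⟫_ℂ
      + ⟪P (lp.single (E := fun _ : ℤ => EuclideanSpace ℂ (Fin n)) 2 m v),
          lp.single (E := fun _ : ℤ => EuclideanSpace ℂ (Fin n)) 2 l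
            ((WithLp.equiv 2 _).symm (A.mulVec w)
              - (Complex.I * (l : ℂ) * ((2 * Real.pi / T : ℝ) : ℂ)) • w)⟫_ℂ
      + ⟪lp.single (E := fun _ : ℤ => EuclideanSpace ℂ (Fin n)) 2 m v, lp.single (E := fun _ : ℤ => EuclideanSpace ℂ (Fin n)) 2 l ((WithLp.equiv 2 _).symm (Q.mulVec w))⟫_ℂ = 0) :
    ∀ μ : ℂ, (∃ v : Fin n → ℂ, v ≠ 0 ∧ A.mulVec v = μ • v) → μ.re < 0 :=
  harmonic_lyapunov_implies_hurwitz_general T A Q hQpos P hPsa hPpos hLyap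
end
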